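/- Let n ≥ 1 be an integer and let ψ ∈ ℂ^(2^n) be a unit vector all of whose coordinates are real. Then for every integer T ≥ 1, there exist a real number ζ with (√2 − 1)/2 ≤ ζ ≤ 1/√2 and unit vectors ψ_0, ψ_1, …, ψ_{T−1} ∈ ℂ^(2^n) such that ‖ψ − ζ·Σ_{k=0}^{T−1} 2^{−k/2}·ψ_k‖₂ ≤ (1/(√2 − 1))·2^{−T/4}, where each ψ_k has the form ψ_k = B_2^{(k)} · H^{⊗n} · B_1^{(k)} · H^{⊗n} · e_0^{(n)} for some Boolean phase oracles B_1^{(k)} and B_2^{(k)} on n qubits. -/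

import Mathlib

open scoped BigOperators
open scoped Matrix

noncomputable section

/-- The `q`-th (little-endian) bit of an index `i < 2^m`. -/
def qbit {m : ℕ} (i : Fin (2 ^ m)) (q : Fin m) : Fin 2 :=
  ⟨(i : ℕ) / 2 ^ (q : ℕ) % 2, Nat.mod_lt _ (by norm_num)⟩

/-- The ℓ² norm of a vector in `ℂ^N`. -/
def l2norm {N : ℕ} (v : Fin N → ℂ) : ℝ :=
  Real.sqrt (∑ i, Complex.normSq (v i))

/-- The ℓ¹ norm of a vector in `ℂ^N`. -/
def l1norm {N : ℕ} (v : Fin N → ℂ) : ℝ :=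
  ∑ i, ‖v i‖

/-- The standard basis vector of `ℂ^(2^k)` indexed by the all-zeros string. -/
def e0 (k : ℕ) : Fin (2 ^ k) → ℂ := fun i => if (i : ℕ) = 0 then 1 else 0

lemma tensor_div_lt {m k : ℕ} (i : Fin (2 ^ (m + k))) : (i : ℕ) / 2 ^ k < 2 ^ m := by
  apply Nat.div_lt_of_lt_mul
  calc (i : ℕ) < 2 ^ (m + k) := i.isLt
    _ = 2 ^ k * 2 ^ m := by rw [pow_add, mul_comm]

/-- Kronecker product of vectors: `ℂ^(2^m) ⊗ ℂ^(2^k) → ℂ^(2^(m+k))`. -/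
def vecTensor {m k : ℕ} (v : Fin (2 ^ m) → ℂ) (w : Fin (2 ^ k) → ℂ) :
    Fin (2 ^ (m + k)) → ℂ := fun i =>
  v ⟨(i : ℕ) / 2 ^ k, tensor_div_lt i⟩ *
    w ⟨(i : ℕ) % 2 ^ k, Nat.mod_lt _ (pow_pos (by norm_num) k)⟩

/-- The single-qubit Pauli matrices `I, X, Y, Z`. -/
def pauliBase : Fin 4 → Matrix (Fin 2) (Fin 2) ℂ :=
  ![!![1, 0; 0, 1], !![0, 1; 1, 0], !![0, -Complex.I; Complex.I, 0], !![1, 0; 0, -1]]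

/-- The Pauli operator `i^b • (P₁ ⊗ ⋯ ⊗ P_m)`. -/
def pauliOf {m : ℕ} (b : Fin 4) (p : Fin m → Fin 4) :
    Matrix (Fin (2 ^ m)) (Fin (2 ^ m)) ℂ :=
  Matrix.of fun i j => Complex.I ^ (b : ℕ) * ∏ q : Fin m, pauliBase (p q) (qbit i q) (qbit j q)

/-- `P` is an `m`-qubit Pauli operator. -/
def IsPauli {m : ℕ} (P : Matrix (Fin (2 ^ m)) (Fin (2 ^ m)) ℂ) : Prop :=
  ∃ b p, P = pauliOf b p

/-- `P` is a Hermitian `m`-qubit Pauli operator. -/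
def IsHermPauli {m : ℕ} (P : Matrix (Fin (2 ^ m)) (Fin (2 ^ m)) ℂ) : Prop :=
  IsPauli P ∧ Pᴴ = P

/-- `C` is an `m`-qubit Clifford unitary. -/
def IsClifford {m : ℕ} (C : Matrix (Fin (2 ^ m)) (Fin (2 ^ m)) ℂ) : Prop :=
  C ∈ Matrix.unitaryGroup (Fin (2 ^ m)) ℂ ∧
    ∀ P : Matrix (Fin (2 ^ m)) (Fin (2 ^ m)) ℂ, IsPauli P → IsPauli (C * P * Cᴴ)

/-- The `T` gate `diag(1, e^{iπ/4})`. -/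
def Tgate : Matrix (Fin 2) (Fin 2) ℂ :=
  !![1, 0; 0, Complex.exp (Complex.I * Real.pi / 4)]

/-- The `T` gate acting on qubit `q`, tensored with the identity on the remaining qubits. -/
def TgateOn {m : ℕ} (q : Fin m) : Matrix (Fin (2 ^ m)) (Fin (2 ^ m)) ℂ :=
  Matrix.diagonal fun i => Tgate (qbit i q) (qbit i q)

/-- `U` is a Clifford+T circuit on `m` qubits with exactly `t` T gates:
`U = C_{t+1} · T^{(q_t)} · C_t ⋯ T^{(q_1)} · C_1`. -/
def IsCTCircuit {m : ℕ} : ℕ → Matrix (Fin (2 ^ m)) (Fin (2 ^ m)) ℂ → Prop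
  | 0, U => IsClifford U
  | t + 1, U => ∃ C q V, IsClifford C ∧ IsCTCircuit t V ∧ U = C * TgateOn q * V

/-- `⟨u, v⟩ = ∑ conj(uᵢ)·vᵢ`. -/
def cInner {N : ℕ} (u v : Fin N → ℂ) : ℂ := ∑ i, (starRingEnd ℂ) (u i) * v i

/-- The Choi state of an `n`-qubit unitary `U`. -/
def choi {n : ℕ} (U : Matrix (Fin (2 ^ n)) (Fin (2 ^ n)) ℂ) : Fin (2 ^ (n + n)) → ℂ :=
  ((Real.sqrt (2 ^ n) : ℂ))⁻¹ •
    ∑ x : Fin (2 ^ n),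
      vecTensor (fun i => if i = x then 1 else 0) (U.mulVec fun i => if i = x then 1 else 0)

/-- The normalized Hilbert–Schmidt norm `√(Tr(A†A)/d)`. -/
def hsnorm {d : ℕ} (A : Matrix (Fin d) (Fin d) ℂ) : ℝ :=
  Real.sqrt ((Aᴴ * A).trace.re / d)

/-- The `n`-qubit Hadamard transform, with entries `2^{-n/2}·(-1)^{x·y}`. -/
def hadamardPow (n : ℕ) : Matrix (Fin (2 ^ n)) (Fin (2 ^ n)) ℂ :=
  Matrix.of fun i j =>
    ((Real.sqrt (2 ^ n) : ℂ))⁻¹ * (-1) ^ (∑ q : Fin n, (qbit i q : ℕ) * (qbit j q : ℕ))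

/-- A Boolean phase oracle: a diagonal matrix with ±1 diagonal entries. -/
def IsPhaseOracle {n : ℕ} (B : Matrix (Fin (2 ^ n)) (Fin (2 ^ n)) ℂ) : Prop :=
  ∃ d : Fin (2 ^ n) → ℂ, (∀ i, d i = 1 ∨ d i = -1) ∧ B = Matrix.diagonal d

/-- The magic state `|T⟩ = (|0⟩ + e^{iπ/4}|1⟩)/√2`. -/
def magic : Fin 2 → ℂ :=
  ![(Real.sqrt 2 : ℂ)⁻¹, (Real.sqrt 2 : ℂ)⁻¹ * Complex.exp (Complex.I * Real.pi / 4)]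

/-- `|T⟩^{⊗t}`. -/
def magicPow (t : ℕ) : Fin (2 ^ t) → ℂ := fun i => ∏ q : Fin t, magic (qbit i q)

/-- The Kronecker product `U 0 ⊗ U 1 ⊗ ⋯ ⊗ U (m-1)` of single-qubit matrices. -/
def kronPow {m : ℕ} (U : Fin m → Matrix (Fin 2) (Fin 2) ℂ) :
    Matrix (Fin (2 ^ m)) (Fin (2 ^ m)) ℂ :=
  Matrix.of fun i j => ∏ q : Fin m, U q (qbit i q) (qbit j q)

/-- The product `C_{m+1}·(I+P_m)·C_m ⋯ (I+P_1)·C_1` (0-indexed). -/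
def postProd {N : ℕ} : (m : ℕ) → (Fin (m + 1) → Matrix (Fin N) (Fin N) ℂ) →
    (Fin m → Matrix (Fin N) (Fin N) ℂ) → Matrix (Fin N) (Fin N) ℂ
  | 0, C, _ => C 0
  | m + 1, C, P =>
      C (Fin.last (m + 1)) * (1 + P (Fin.last m)) *
        postProd m (fun j => C j.castSucc) (fun j => P j.castSucc)

/-- The product `(I+P_c)·(I+P_{c-1}) ⋯ (I+P_1)` (0-indexed). -/
def projProd {N : ℕ} : (c : ℕ) → (Fin c → Matrix (Fin N) (Fin N) ℂ) → Matrix (Fin N) (Fin N) ℂ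
  | 0, _ => 1
  | c + 1, P => (1 + P (Fin.last c)) * projProd c (fun j => P j.castSucc)

lemma blockDiag_lt {n : ℕ} (i : Fin (2 ^ (n + 1))) : (i : ℕ) / 2 < 2 ^ n := by
  apply Nat.div_lt_of_lt_mul
  calc (i : ℕ) < 2 ^ (n + 1) := i.isLt
    _ = 2 * 2 ^ n := by rw [pow_succ, mul_comm]

/-- The block-diagonal matrix `diag(U_1, …, U_{2^n})` with 2×2 diagonal blocks. -/
def blockDiag2 {n : ℕ} (U : Fin (2 ^ n) → Matrix (Fin 2) (Fin 2) ℂ) :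
    Matrix (Fin (2 ^ (n + 1))) (Fin (2 ^ (n + 1))) ℂ :=
  Matrix.of fun i j =>
    if (i : ℕ) / 2 = (j : ℕ) / 2 then
      U ⟨(i : ℕ) / 2, blockDiag_lt i⟩ ⟨(i : ℕ) % 2, Nat.mod_lt _ (by norm_num)⟩
        ⟨(j : ℕ) % 2, Nat.mod_lt _ (by norm_num)⟩
    else 0

/-- The stabilizer group of a family of `n`-qubit states, as a set of Pauli operators. -/
def stabFamily {n : ℕ} {S : Type*} (f : S → (Fin (2 ^ n) → ℂ)) :
    Set (Matrix (Fin (2 ^ n)) (Fin (2 ^ n)) ℂ) :=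
  {P | IsPauli P ∧ ∀ lam : S, P.mulVec (f lam) = f lam}

/-!
The greedy residuals `r₀ = ψ`, `r_{k+1} = r_k - 2^{-(k+1)/2} φ_k` satisfy `‖r_k‖ ≤ 2^{-k/2}`
as soon as each `r_k` admits a unit state `φ_k = B₂ H B₁ H |0⟩` with `⟨φ_k, r_k⟩ ≥ ‖r_k‖ / √2`.

Write `h` for the `±1` Hadamard signs. For a real vector `u` and a sign vector `ε`, let `B₁` carry
the signs of `h (ε ⊙ |u|)` and `B₂` those of `u ⊙ (H B₁ H |0⟩)`; then
`⟨φ, u⟩ ≥ 2^{-n} ∑_y |∑_x εₓ |uₓ| h_{xy}|`, and averaging over `ε`, the sharp Khintchine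
inequality `E |∑ aᵢ εᵢ| ≥ ‖a‖ / √2` (Szarek) gives `⟨φ, u⟩ ≥ ‖u‖ / √2` for some `ε`.

Khintchine's inequality is proved as by Latała and Oleszkiewicz: on `{±1}^m`, `f = |∑ aᵢ εᵢ|`
satisfies `∑ᵢ f(x with bit i flipped) ≥ (m - 2) f(x)`, which bounds the level-weighted Walsh
spectrum of `f` by its energy `‖f‖²`. Since `f` is even its spectrum lives on even levels, so at
least half of the energy sits at level `0`, that is `(E f)² ≥ ‖f‖² / 2 = ‖a‖² / 2`.
-/

open Finset
open scoped symmDiff RealInnerProductSpace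

def boolSign (b : Bool) : ℝ := if b then -1 else 1

@[simp] lemma boolSign_true : boolSign true = -1 := rfl
@[simp] lemma boolSign_false : boolSign false = 1 := rfl

lemma boolSign_xor (a b : Bool) : boolSign (xor a b) = boolSign a * boolSign b := by
  cases a <;> cases b <;> simp

lemma boolSign_not (b : Bool) : boolSign (!b) = -boolSign b := by
  cases b <;> simp

lemma boolSign_sq (b : Bool) : boolSign b ^ 2 = 1 := by
  cases b <;> simp

lemma abs_boolSign (b : Bool) : |boolSign b| = 1 := by
  cases b <;> simp

lemma boolSign_decide_lt_zero_mul (r : ℝ) : boolSign (decide (r < 0)) * r = |r| := by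
  by_cases h : r < 0
  · simp [h, abs_of_neg h]
  · simp [h, abs_of_nonneg (not_lt.mp h)]

section Orthogonal

variable {X J : Type*} [Fintype X] [Fintype J] [DecidableEq J]

lemma sum_sq_sum_mul_of_orthogonal (χ : J → X → ℝ) (c : ℝ)
    (horth : ∀ j j', ∑ x, χ j x * χ j' x = if j = j' then c else 0) (a : J → ℝ) :
    ∑ x, (∑ j, a j * χ j x) ^ 2 = c * ∑ j, a j ^ 2 := by
  calc ∑ x, (∑ j, a j * χ j x) ^ 2
      = ∑ j, ∑ j', a j * a j' * ∑ x, χ j x * χ j' x := by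
        simp_rw [sq, sum_mul_sum, mul_sum]
        rw [sum_comm]
        refine sum_congr rfl fun j _ => ?_
        rw [sum_comm]
        exact sum_congr rfl fun j' _ => sum_congr rfl fun x _ => by ring
    _ = c * ∑ j, a j ^ 2 := by
        simp [horth, mul_sum, sq, mul_comm]

end Orthogonal

namespace BooleanCube

def boolSingle {ι : Type*} [DecidableEq ι] (i : ι) : ι → Bool := fun j => decide (j = i)

lemma boolSingle_injective {ι : Type*} [DecidableEq ι] :
    Function.Injective (boolSingle : ι → ι → Bool) := fun i j h => by
  simpa [boolSingle] using congrFun h i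

variable {ι : Type*} [Fintype ι]

def walsh (w x : ι → Bool) : ℝ := ∏ i, boolSign (w i && x i)

lemma walsh_comm (w x : ι → Bool) : walsh w x = walsh x w := by
  simp only [walsh, Bool.and_comm]

lemma walsh_symmDiff (w x c : ι → Bool) : walsh w (x ∆ c) = walsh w x * walsh w c := by
  simp only [walsh, ← prod_mul_distrib, Pi.symmDiff_apply, Bool.symmDiff_eq_xor,
    Bool.and_xor_distrib_left, boolSign_xor]

lemma walsh_mul_walsh (w v x : ι → Bool) : walsh w x * walsh v x = walsh (w ∆ v) x := by
  rw [walsh_comm w, walsh_comm v, walsh_comm (w ∆ v), walsh_symmDiff]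

lemma walsh_boolSingle [DecidableEq ι] (i : ι) (x : ι → Bool) :
    walsh (boolSingle i) x = boolSign (x i) := by
  rw [walsh, prod_eq_single i] <;> simp +contextual [boolSingle]

lemma walsh_top (w : ι → Bool) : walsh w ⊤ = (-1) ^ #{i | w i} := by
  calc walsh w ⊤ = ∏ i, if w i then (-1 : ℝ) else 1 :=
        prod_congr rfl fun i _ => by cases w i <;> rfl
    _ = _ := by rw [prod_ite, prod_const_one, mul_one, prod_const]

def signSum (a : ι → ℝ) (x : ι → Bool) : ℝ := ∑ i, a i * boolSign (x i)

lemma signSum_compl (a : ι → ℝ) (x : ι → Bool) : signSum a xᶜ = -signSum a x := by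
  simp only [signSum, ← sum_neg_distrib, Pi.compl_apply]
  exact sum_congr rfl fun i _ => by cases x i <;> simp

variable [DecidableEq ι]

lemma sum_walsh (w : ι → Bool) :
    ∑ x, walsh w x = if w = ⊥ then (2 : ℝ) ^ Fintype.card ι else 0 := by
  have hcoord : ∀ i, ∑ b, boolSign (w i && b) = if w i then 0 else 2 := fun i => by
    cases w i <;> norm_num
  simp only [walsh]
  rw [← Fintype.prod_sum fun i b => boolSign (w i && b), prod_congr rfl fun i _ => hcoord i]
  split_ifs with hw
  · simp [hw]
  · obtain ⟨i, hi⟩ : ∃ i, w i = true := by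
      by_contra! h
      exact hw (funext fun i => by simpa using h i)
    exact prod_eq_zero (mem_univ i) (by simp [hi])

lemma sum_walsh_mul_walsh (w v : ι → Bool) :
    ∑ x, walsh w x * walsh v x = if w = v then (2 : ℝ) ^ Fintype.card ι else 0 := by
  simp only [walsh_mul_walsh, sum_walsh, symmDiff_eq_bot]

lemma sum_boolSign_mul_boolSign (i j : ι) :
    ∑ x : ι → Bool, boolSign (x i) * boolSign (x j) =
      if i = j then (2 : ℝ) ^ Fintype.card ι else 0 := by
  simp only [← walsh_boolSingle, sum_walsh_mul_walsh, boolSingle_injective.eq_iff]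

lemma sum_comp_symmDiff (F : (ι → Bool) → ℝ) (c : ι → Bool) :
    ∑ x, F (x ∆ c) = ∑ x, F x :=
  Fintype.sum_bijective _ (symmDiff_left_involutive c).bijective _ _ fun _ => rfl

lemma sum_comp_compl (F : (ι → Bool) → ℝ) : ∑ x, F xᶜ = ∑ x, F x :=
  Fintype.sum_bijective _ compl_involutive.bijective _ _ fun _ => rfl

def walshCoeff (f : (ι → Bool) → ℝ) (w : ι → Bool) : ℝ := ∑ x, f x * walsh w x

lemma sum_walshCoeff_sq (f : (ι → Bool) → ℝ) :
    ∑ w, walshCoeff f w ^ 2 = 2 ^ Fintype.card ι * ∑ x, f x ^ 2 := by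
  convert sum_sq_sum_mul_of_orthogonal walsh _ sum_walsh_mul_walsh f using 3 with w
  simp only [walshCoeff, walsh_comm w]

lemma walshCoeff_bot (f : (ι → Bool) → ℝ) : walshCoeff f ⊥ = ∑ x, f x := by
  simp [walshCoeff, walsh]

lemma walshCoeff_comp_symmDiff (f : (ι → Bool) → ℝ) (c w : ι → Bool) :
    walshCoeff (fun x => f (x ∆ c)) w = walsh w c * walshCoeff f w := by
  rw [walshCoeff, ← sum_comp_symmDiff _ c, walshCoeff, mul_sum]
  refine sum_congr rfl fun x _ => ?_
  rw [symmDiff_symmDiff_cancel_right, walsh_symmDiff]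
  ring

lemma walsh_boolSingle_right (w : ι → Bool) (i : ι) : walsh w (boolSingle i) = boolSign (w i) := by
  rw [walsh_comm, walsh_boolSingle]

lemma walshCoeff_sub_comp_boolSingle (f : (ι → Bool) → ℝ) (i : ι) (w : ι → Bool) :
    walshCoeff (fun x => f x - f (x ∆ boolSingle i)) w = (1 - boolSign (w i)) * walshCoeff f w := by
  have h := walshCoeff_comp_symmDiff f (boolSingle i) w
  simp only [walshCoeff, sub_mul, sum_sub_distrib] at h ⊢
  rw [h, walsh_boolSingle_right]
  ring

lemma sum_card_mul_walshCoeff_sq (f : (ι → Bool) → ℝ) :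
    4 * ∑ w, (#{i | w i} : ℝ) * walshCoeff f w ^ 2 =
      2 ^ Fintype.card ι * ∑ i, ∑ x, (f x - f (x ∆ boolSingle i)) ^ 2 := by
  have hlevel : ∀ w : ι → Bool, 4 * (#{i | w i} : ℝ) = ∑ i, (1 - boolSign (w i)) ^ 2 := by
    intro w
    rw [← sum_boole, mul_sum]
    exact sum_congr rfl fun i _ => by cases w i <;> norm_num
  calc 4 * ∑ w, (#{i | w i} : ℝ) * walshCoeff f w ^ 2
      = ∑ i, ∑ w, walshCoeff (fun x => f x - f (x ∆ boolSingle i)) w ^ 2 := by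
        simp_rw [walshCoeff_sub_comp_boolSingle, mul_pow, mul_sum, ← mul_assoc, hlevel, sum_mul]
        exact sum_comm
    _ = _ := by simp_rw [sum_walshCoeff_sq, mul_sum]

lemma walshCoeff_eq_zero_of_odd {f : (ι → Bool) → ℝ} (hf : ∀ x, f xᶜ = f x) {w : ι → Bool}
    (hw : Odd #{i | w i}) : walshCoeff f w = 0 := by
  have h : walshCoeff f w = - walshCoeff f w := by
    conv_lhs => rw [walshCoeff, ← sum_comp_compl]
    rw [walshCoeff, ← sum_neg_distrib]
    refine sum_congr rfl fun x _ => ?_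
    rw [hf, ← hnot_eq_compl, ← symmDiff_top, walsh_symmDiff, walsh_top, hw.neg_one_pow]
    ring
  linarith

lemma two_mul_sum_walshCoeff_sq_le {f : (ι → Bool) → ℝ} (hf : ∀ x, f xᶜ = f x) :
    2 * (∑ w, walshCoeff f w ^ 2 - walshCoeff f ⊥ ^ 2) ≤
      ∑ w, (#{i | w i} : ℝ) * walshCoeff f w ^ 2 := by
  rw [← sum_erase_add _ _ (mem_univ ⊥), add_sub_cancel_right, mul_sum]
  refine (sum_le_sum fun w hw => ?_).trans
    (sum_le_sum_of_subset_of_nonneg (erase_subset _ _) fun w _ _ => by positivity)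
  rcases Nat.even_or_odd #{i | w i} with heven | hodd
  · have hpos : #{i | w i} ≠ 0 := by
      intro h0
      refine (mem_erase.mp hw).1 (funext fun i => ?_)
      simpa using filter_eq_empty_iff.mp (card_eq_zero.mp h0) (mem_univ i)
    have h2 : (2 : ℝ) ≤ #{i | w i} := by
      obtain ⟨k, hk⟩ := heven
      exact_mod_cast (show 2 ≤ #{i | w i} by omega)
    exact mul_le_mul_of_nonneg_right h2 (sq_nonneg _)
  · simp [walshCoeff_eq_zero_of_odd hf hodd]

lemma sum_signSum_sq (a : ι → ℝ) :
    ∑ x, signSum a x ^ 2 = 2 ^ Fintype.card ι * ∑ i, a i ^ 2 := by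
  rw [← sum_sq_sum_mul_of_orthogonal (fun (i : ι) (x : ι → Bool) => boolSign (x i)) _
    sum_boolSign_mul_boolSign a]
  rfl

lemma signSum_symmDiff_boolSingle (a : ι → ℝ) (x : ι → Bool) (i : ι) :
    signSum a (x ∆ boolSingle i) = signSum a x - 2 * (a i * boolSign (x i)) := by
  have hterm : ∀ j, a j * boolSign ((x ∆ boolSingle i) j) =
      a j * boolSign (x j) - if j = i then 2 * (a j * boolSign (x j)) else 0 := fun j => by
    by_cases hj : j = i
    · simp only [hj, Pi.symmDiff_apply, boolSingle, decide_true, Bool.symmDiff_eq_xor,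
        Bool.bne_true, boolSign_not, if_true]
      ring
    · simp [hj, boolSingle]
  simp only [signSum, hterm, sum_sub_distrib, sum_ite_eq', mem_univ, if_true]

lemma card_sub_two_mul_abs_signSum_le (a : ι → ℝ) (x : ι → Bool) :
    ((Fintype.card ι : ℝ) - 2) * |signSum a x| ≤ ∑ i, |signSum a (x ∆ boolSingle i)| := by
  have hsum : ∑ i, signSum a (x ∆ boolSingle i) = ((Fintype.card ι : ℝ) - 2) * signSum a x := by
    simp only [signSum_symmDiff_boolSingle, sum_sub_distrib, ← mul_sum, sum_const, card_univ,
      nsmul_eq_mul]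
    rw [signSum]
    ring
  calc ((Fintype.card ι : ℝ) - 2) * |signSum a x|
      ≤ |((Fintype.card ι : ℝ) - 2) * signSum a x| := by
        rw [abs_mul]
        exact mul_le_mul_of_nonneg_right (le_abs_self _) (abs_nonneg _)
    _ ≤ ∑ i, |signSum a (x ∆ boolSingle i)| := hsum ▸ abs_sum_le_sum_abs _ _

lemma sum_sum_abs_signSum_sub_sq_le (a : ι → ℝ) :
    ∑ i, ∑ x, (|signSum a x| - |signSum a (x ∆ boolSingle i)|) ^ 2 ≤
      4 * ∑ x, |signSum a x| ^ 2 := by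
  set f : (ι → Bool) → ℝ := fun x => |signSum a x|
  have hexpand : ∀ i, ∑ x, (f x - f (x ∆ boolSingle i)) ^ 2 =
      2 * ∑ x, f x ^ 2 - 2 * ∑ x, f x * f (x ∆ boolSingle i) := fun i => by
    simp only [sub_sq, sum_add_distrib, sum_sub_distrib, sum_comp_symmDiff (fun x => f x ^ 2),
      ← mul_sum, mul_assoc]
    ring
  have hsubharm : ∑ x, ((Fintype.card ι : ℝ) - 2) * f x ^ 2 ≤
      ∑ i, ∑ x, f x * f (x ∆ boolSingle i) := by
    rw [sum_comm]
    refine sum_le_sum fun x _ => ?_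
    rw [← mul_sum, sq, mul_left_comm]
    exact mul_le_mul_of_nonneg_left (card_sub_two_mul_abs_signSum_le a x) (abs_nonneg _)
  show ∑ i, ∑ x, (f x - f (x ∆ boolSingle i)) ^ 2 ≤ 4 * ∑ x, f x ^ 2
  rw [← mul_sum] at hsubharm
  simp only [hexpand, sum_sub_distrib, sum_const, card_univ, nsmul_eq_mul, ← mul_sum]
  linarith

theorem khintchine (a : ι → ℝ) :
    2 ^ Fintype.card ι * √(∑ i, a i ^ 2) ≤ √2 * ∑ x, |signSum a x| := by
  set f : (ι → Bool) → ℝ := fun x => |signSum a x|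
  have hf : ∀ x, f xᶜ = f x := fun x => by simp [f, signSum_compl]
  have henergy : ∑ x, f x ^ 2 = 2 ^ Fintype.card ι * ∑ i, a i ^ 2 := by
    simp only [f, sq_abs, sum_signSum_sq]
  have h2N : (0 : ℝ) < 2 ^ Fintype.card ι := by positivity
  have hlevel : ∑ w, (#{i | w i} : ℝ) * walshCoeff f w ^ 2 ≤ 2 ^ Fintype.card ι * ∑ x, f x ^ 2 := by
    nlinarith [sum_card_mul_walshCoeff_sq f, sum_sum_abs_signSum_sub_sq_le a]
  have hlevel0 : 2 ^ Fintype.card ι * ∑ x, f x ^ 2 ≤ 2 * (∑ x, f x) ^ 2 := by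
    linarith [sum_walshCoeff_sq f, walshCoeff_bot f ▸ two_mul_sum_walshCoeff_sq_le hf]
  have hsq : (2 ^ Fintype.card ι * √(∑ i, a i ^ 2)) ^ 2 ≤ (√2 * ∑ x, f x) ^ 2 := by
    rw [mul_pow, mul_pow, Real.sq_sqrt (by positivity), Real.sq_sqrt zero_le_two]
    rw [henergy] at hlevel0
    linarith
  exact le_of_pow_le_pow_left₀ two_ne_zero (by positivity) hsq

end BooleanCube

open BooleanCube

def bitsEquiv (n : ℕ) : Fin (2 ^ n) ≃ (Fin n → Bool) :=
  finFunctionFinEquiv.symm.trans (Equiv.piCongrRight fun _ => finTwoEquiv)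

lemma bitsEquiv_apply {n : ℕ} (x : Fin (2 ^ n)) (q : Fin n) :
    bitsEquiv n x q = (qbit x q == 1) := by
  have hq : finFunctionFinEquiv.symm x q = qbit x q :=
    Fin.ext (finFunctionFinEquiv_symm_apply_val x q)
  simp [bitsEquiv, hq, finTwoEquiv]

def hadamardSign {n : ℕ} (x y : Fin (2 ^ n)) : ℝ :=
  (-1) ^ (∑ q : Fin n, (qbit x q : ℕ) * (qbit y q : ℕ))

lemma hadamardSign_eq_walsh {n : ℕ} (x y : Fin (2 ^ n)) :
    hadamardSign x y = walsh (bitsEquiv n x) (bitsEquiv n y) := by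
  rw [hadamardSign, ← prod_pow_eq_pow_sum, walsh]
  refine prod_congr rfl fun q _ => ?_
  rw [bitsEquiv_apply, bitsEquiv_apply]
  generalize qbit x q = a
  generalize qbit y q = b
  fin_cases a <;> fin_cases b <;> simp

lemma hadamardSign_sq {n : ℕ} (x y : Fin (2 ^ n)) : hadamardSign x y ^ 2 = 1 := by
  rw [hadamardSign, ← pow_mul, pow_mul', neg_one_sq, one_pow]

lemma sum_hadamardSign_mul {n : ℕ} (y y' : Fin (2 ^ n)) :
    ∑ x, hadamardSign x y * hadamardSign x y' = if y = y' then (2 : ℝ) ^ n else 0 := by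
  calc ∑ x, hadamardSign x y * hadamardSign x y'
      = ∑ v, walsh (bitsEquiv n y) v * walsh (bitsEquiv n y') v := by
        rw [← (bitsEquiv n).sum_comp]
        refine sum_congr rfl fun x _ => ?_
        rw [hadamardSign_eq_walsh, hadamardSign_eq_walsh, walsh_comm (bitsEquiv n x),
          walsh_comm (bitsEquiv n x)]
    _ = _ := by simp only [sum_walsh_mul_walsh, (bitsEquiv n).injective.eq_iff, Fintype.card_fin]

section SignState

variable {X Y : Type*} [Fintype X] [Fintype Y]

/-- For the Hadamard signs `h` this is `B₂ H B₁ H |0⟩`, where `B₁`, `B₂` are the diagonal sign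
matrices of `t`, `s` (`diagonal_mul_hadamardPow_mulVec_e0`). -/
def signState (h : X → Y → ℝ) (t : Y → Bool) (s : X → Bool) (x : X) : ℝ :=
  boolSign (s x) * ((Fintype.card Y : ℝ)⁻¹ * ∑ y, boolSign (t y) * h x y)

lemma sum_signState_sq [Nonempty X] [DecidableEq X] (h : X → X → ℝ)
    (horth : ∀ y y', ∑ x, h x y * h x y' = if y = y' then (Fintype.card X : ℝ) else 0)
    (t s : X → Bool) : ∑ x, signState h t s x ^ 2 = 1 := by
  have hN : (Fintype.card X : ℝ) ≠ 0 := Nat.cast_ne_zero.mpr Fintype.card_ne_zero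
  have hsq := sum_sq_sum_mul_of_orthogonal (fun y x => h x y) _ horth fun y => boolSign (t y)
  simp only [signState, mul_pow, boolSign_sq, one_mul, ← mul_sum, hsq, sum_const, card_univ,
    nsmul_eq_mul, mul_one]
  field_simp

lemma exists_sum_abs_signSum_le_sum_signState_mul [Nonempty Y] (h : X → Y → ℝ) (u : X → ℝ)
    (ε : X → Bool) : ∃ t s, ∑ y, |signSum (fun x => |u x| * h x y) ε| ≤
      Fintype.card Y * ∑ x, signState h t s x * u x := by
  set T : Y → ℝ := fun y => signSum (fun x => |u x| * h x y) ε
  set t : Y → Bool := fun y => decide (T y < 0)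
  set w : X → ℝ := fun x => ∑ y, boolSign (t y) * h x y
  refine ⟨t, fun x => decide (u x * w x < 0), ?_⟩
  have hN : (Fintype.card Y : ℝ) ≠ 0 := Nat.cast_ne_zero.mpr Fintype.card_ne_zero
  calc ∑ y, |T y| = ∑ y, boolSign (t y) * T y := by simp only [t, boolSign_decide_lt_zero_mul]
    _ = ∑ x, boolSign (ε x) * |u x| * w x := by
        simp only [T, w, signSum, mul_sum]
        rw [sum_comm]
        exact sum_congr rfl fun x _ => sum_congr rfl fun y _ => by ring
    _ ≤ ∑ x, |u x * w x| := sum_le_sum fun x _ => (le_abs_self _).trans_eq <| by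
        rw [abs_mul, abs_mul, abs_boolSign, one_mul, abs_abs, abs_mul]
    _ = Fintype.card Y * ∑ x, signState h t (fun x => decide (u x * w x < 0)) x * u x := by
        rw [mul_sum]
        refine sum_congr rfl fun x _ => ?_
        rw [← boolSign_decide_lt_zero_mul, signState]
        field_simp
        ring

lemma exists_sum_abs_signSum_ge [DecidableEq X] (h : X → Y → ℝ) (hh : ∀ x y, h x y ^ 2 = 1)
    (u : X → ℝ) : ∃ ε : X → Bool, Fintype.card Y * √(∑ x, u x ^ 2) ≤
      √2 * ∑ y, |signSum (fun x => |u x| * h x y) ε| := by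
  have hkh : ∀ y, 2 ^ Fintype.card X * √(∑ x, u x ^ 2) ≤
      √2 * ∑ ε : X → Bool, |signSum (fun x => |u x| * h x y) ε| := fun y => by
    simpa only [mul_pow, sq_abs, hh, mul_one] using khintchine fun x => |u x| * h x y
  have havg : ∑ _ε : X → Bool, Fintype.card Y * √(∑ x, u x ^ 2) ≤
      ∑ ε : X → Bool, √2 * ∑ y, |signSum (fun x => |u x| * h x y) ε| :=
    calc ∑ _ε : X → Bool, Fintype.card Y * √(∑ x, u x ^ 2)
        = ∑ _y : Y, 2 ^ Fintype.card X * √(∑ x, u x ^ 2) := by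
          simp only [sum_const, card_univ, Fintype.card_fun, Fintype.card_bool, nsmul_eq_mul]
          push_cast
          ring
      _ ≤ ∑ y, √2 * ∑ ε : X → Bool, |signSum (fun x => |u x| * h x y) ε| :=
          sum_le_sum fun y _ => hkh y
      _ = ∑ ε : X → Bool, √2 * ∑ y, |signSum (fun x => |u x| * h x y) ε| := by
          simp only [← mul_sum]
          rw [sum_comm]
  obtain ⟨ε, -, hε⟩ := exists_le_of_sum_le univ_nonempty havg
  exact ⟨ε, hε⟩

lemma exists_sqrt_sum_sq_le_sum_signState_mul [DecidableEq X] [Nonempty Y] (h : X → Y → ℝ)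
    (hh : ∀ x y, h x y ^ 2 = 1) (u : X → ℝ) :
    ∃ t s, √(∑ x, u x ^ 2) ≤ √2 * ∑ x, signState h t s x * u x := by
  obtain ⟨ε, hε⟩ := exists_sum_abs_signSum_ge h hh u
  obtain ⟨t, s, hts⟩ := exists_sum_abs_signSum_le_sum_signState_mul h u ε
  refine ⟨t, s, le_of_mul_le_mul_left ?_ (Nat.cast_pos.mpr (Fintype.card_pos (α := Y)))⟩
  calc (Fintype.card Y : ℝ) * √(∑ x, u x ^ 2)
      ≤ √2 * (Fintype.card Y * ∑ x, signState h t s x * u x) :=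
        hε.trans (mul_le_mul_of_nonneg_left hts (Real.sqrt_nonneg 2))
    _ = _ := by ring

end SignState

section Greedy

variable {E : Type*} [NormedAddCommGroup E] [InnerProductSpace ℝ E]

lemma norm_sub_smul_le_of_le_inner {r φ : E} {ρ : ℝ} (hr : ‖r‖ ≤ ρ) (hφ : ‖φ‖ = 1)
    (hinner : ‖r‖ ≤ √2 * ⟪φ, r⟫) : ‖r - (ρ / √2) • φ‖ ≤ ρ / √2 := by
  have hρ : 0 ≤ ρ := (norm_nonneg r).trans hr
  have h2 : √2 * √2 = 2 := Real.mul_self_sqrt zero_le_two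
  have hsq : ‖r - (ρ / √2) • φ‖ ^ 2 ≤ (ρ / √2) ^ 2 := by
    rw [norm_sub_sq_real, inner_smul_right, real_inner_comm, norm_smul, hφ, mul_one,
      Real.norm_of_nonneg (by positivity), div_pow, Real.sq_sqrt zero_le_two]
    have hcross : ρ * ‖r‖ ≤ 2 * (ρ / √2) * ⟪φ, r⟫ := by
      calc ρ * ‖r‖ ≤ ρ * (√2 * ⟪φ, r⟫) := mul_le_mul_of_nonneg_left hinner hρ
        _ = 2 * (ρ / √2) * ⟪φ, r⟫ := by field_simp; linear_combination ρ * ⟪φ, r⟫ * h2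
    nlinarith [norm_nonneg r]
  exact abs_le_of_sq_le_sq hsq (by positivity) |>.trans' (le_abs_self _)

theorem exists_norm_sub_sum_le {S : Set E} (hS : ∀ φ ∈ S, ‖φ‖ = 1)
    (hgood : ∀ u, ∃ φ ∈ S, ‖u‖ ≤ √2 * ⟪φ, u⟫) {ψ : E} (hψ : ‖ψ‖ ≤ 1) (T : ℕ) :
    ∃ φ : Fin T → E, (∀ k, φ k ∈ S) ∧
      ‖ψ - ∑ k : Fin T, (√2)⁻¹ ^ ((k : ℕ) + 1) • φ k‖ ≤ (√2)⁻¹ ^ T := by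
  induction T with
  | zero => exact ⟨Fin.elim0, fun k => k.elim0, by simpa using hψ⟩
  | succ T ih =>
    obtain ⟨φ, hφS, hφ⟩ := ih
    obtain ⟨φ', hφ'S, hφ'⟩ := hgood (ψ - ∑ k : Fin T, (√2)⁻¹ ^ ((k : ℕ) + 1) • φ k)
    refine ⟨Fin.snoc φ φ', Fin.lastCases (by simpa using hφ'S) (by simpa using hφS), ?_⟩
    have hstep := norm_sub_smul_le_of_le_inner hφ (hS φ' hφ'S) hφ'
    simp only [Fin.sum_univ_castSucc, Fin.snoc_castSucc, Fin.snoc_last, Fin.val_castSucc,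
      Fin.val_last, ← sub_sub]
    simpa only [div_eq_mul_inv, ← pow_succ] using hstep

end Greedy

lemma l2norm_ofReal {N : ℕ} (v : EuclideanSpace ℝ (Fin N)) : l2norm (fun i => (v i : ℂ)) = ‖v‖ := by
  simp [l2norm, EuclideanSpace.norm_eq, Complex.normSq_ofReal, sq]

def hadamardStates (n : ℕ) : Set (EuclideanSpace ℝ (Fin (2 ^ n))) :=
  {φ | ∃ t s, φ = WithLp.toLp 2 (signState hadamardSign t s)}

lemma norm_of_mem_hadamardStates {n : ℕ} {φ : EuclideanSpace ℝ (Fin (2 ^ n))}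
    (hφ : φ ∈ hadamardStates n) : ‖φ‖ = 1 := by
  obtain ⟨t, s, rfl⟩ := hφ
  rw [EuclideanSpace.norm_eq]
  simp only [Real.norm_eq_abs, sq_abs]
  rw [sum_signState_sq _ (by simpa using sum_hadamardSign_mul), Real.sqrt_one]

lemma exists_mem_hadamardStates_le_inner {n : ℕ} (u : EuclideanSpace ℝ (Fin (2 ^ n))) :
    ∃ φ ∈ hadamardStates n, ‖u‖ ≤ √2 * ⟪φ, u⟫ := by
  obtain ⟨t, s, hts⟩ := exists_sqrt_sum_sq_le_sum_signState_mul hadamardSign hadamardSign_sq u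
  refine ⟨_, ⟨t, s, rfl⟩, ?_⟩
  simpa [EuclideanSpace.norm_eq, PiLp.inner_apply, mul_comm] using hts

lemma isPhaseOracle_diagonal_boolSign {n : ℕ} (s : Fin (2 ^ n) → Bool) :
    IsPhaseOracle (Matrix.diagonal fun x => (boolSign (s x) : ℂ)) :=
  ⟨_, fun x => by cases s x <;> simp, rfl⟩

lemma hadamardPow_mulVec_e0 (n : ℕ) :
    hadamardPow n *ᵥ e0 n = fun _ => ((√(2 ^ n) : ℝ) : ℂ)⁻¹ := by
  funext y
  rw [Matrix.mulVec, dotProduct, sum_eq_single ⟨0, Nat.two_pow_pos n⟩]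
  · simp [hadamardPow, e0, qbit]
  · intro x _ hx
    simp [e0, Fin.ext_iff.not.mp hx]
  · simp

lemma diagonal_mul_hadamardPow_mulVec_e0 {n : ℕ} (t s : Fin (2 ^ n) → Bool) :
    (Matrix.diagonal (fun x => (boolSign (s x) : ℂ)) * hadamardPow n *
        Matrix.diagonal (fun y => (boolSign (t y) : ℂ)) * hadamardPow n) *ᵥ e0 n =
      fun x => (signState hadamardSign t s x : ℂ) := by
  have hinner : ∀ c : ℂ, Matrix.diagonal (fun y => (boolSign (t y) : ℂ)) *ᵥ (fun _ => c) =
      fun y => (boolSign (t y) : ℂ) * c := fun c => funext fun y => Matrix.mulVec_diagonal _ _ y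
  simp only [← Matrix.mulVec_mulVec, hadamardPow_mulVec_e0, hinner]
  funext x
  rw [Matrix.mulVec_diagonal]
  simp only [Matrix.mulVec, dotProduct, hadamardPow, Matrix.of_apply, signState, hadamardSign,
    Fintype.card_fin, mul_sum]
  have hc : ((√(2 ^ n) : ℝ) : ℂ)⁻¹ * ((√(2 ^ n) : ℝ) : ℂ)⁻¹ = ((2 : ℂ) ^ n)⁻¹ := by
    rw [← mul_inv, ← Complex.ofReal_mul, Real.mul_self_sqrt (by positivity)]
    push_cast
    rfl
  push_cast
  refine sum_congr rfl fun y _ => ?_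
  linear_combination (boolSign (s x) * boolSign (t y) *
    (-1 : ℂ) ^ ∑ q : Fin n, (qbit x q : ℕ) * (qbit y q : ℕ)) * hc

lemma two_rpow_neg_div_two (k : ℕ) : (2 : ℝ) ^ (-(k : ℝ) / 2) = (√2)⁻¹ ^ k := by
  rw [Real.sqrt_eq_rpow, ← Real.rpow_neg zero_le_two, ← Real.rpow_natCast,
    ← Real.rpow_mul zero_le_two]
  ring_nf

lemma inv_sqrt_two_pow_le (T : ℕ) : (√2)⁻¹ ^ T ≤ (√2 - 1)⁻¹ * 2 ^ (-(T : ℝ) / 4) := by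
  have h1 : 1 ≤ (√2 - 1)⁻¹ := by
    rw [one_le_inv₀] <;> nlinarith [Real.sq_sqrt (zero_le_two : (0 : ℝ) ≤ 2), Real.sqrt_nonneg 2]
  rw [← two_rpow_neg_div_two]
  calc (2 : ℝ) ^ (-(T : ℝ) / 2) ≤ 2 ^ (-(T : ℝ) / 4) :=
        Real.rpow_le_rpow_of_exponent_le one_le_two (by linarith [(T.cast_nonneg : (0 : ℝ) ≤ T)])
    _ ≤ _ := le_mul_of_one_le_left (by positivity) h1

lemma sqrt_two_sub_one_div_two_le : (√2 - 1) / 2 ≤ (√2)⁻¹ := by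
  nlinarith [Real.sq_sqrt (zero_le_two : (0 : ℝ) ≤ 2), Real.sqrt_nonneg 2,
    inv_mul_cancel₀ (Real.sqrt_ne_zero'.mpr two_pos)]

theorem approx_coeff_simple_general (n : ℕ) (ψ : Fin (2 ^ n) → ℂ)
    (hψ : l2norm ψ = 1) (hreal : ∀ i, (ψ i).im = 0) (T : ℕ) :
    ∃ (ζ : ℝ) (ψs : Fin T → Fin (2 ^ n) → ℂ),
      (Real.sqrt 2 - 1) / 2 ≤ ζ ∧ ζ ≤ (Real.sqrt 2)⁻¹ ∧
      (∀ k, l2norm (ψs k) = 1) ∧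
      (∀ k : Fin T, ∃ B₁ B₂ : Matrix (Fin (2 ^ n)) (Fin (2 ^ n)) ℂ,
        IsPhaseOracle B₁ ∧ IsPhaseOracle B₂ ∧
        ψs k = (B₂ * hadamardPow n * B₁ * hadamardPow n).mulVec (e0 n)) ∧
      l2norm (ψ - (ζ : ℂ) •
          ∑ k : Fin T, (((2 : ℝ) ^ (-(k : ℝ) / 2) : ℝ) : ℂ) • ψs k)
        ≤ (Real.sqrt 2 - 1)⁻¹ * (2 : ℝ) ^ (-(T : ℝ) / 4) := by
  set ψr : EuclideanSpace ℝ (Fin (2 ^ n)) := WithLp.toLp 2 fun x => (ψ x).re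
  have hψr : ψ = fun x => (ψr x : ℂ) := funext fun x => Complex.ext rfl (by simp [hreal])
  obtain ⟨φ, hφS, hφ⟩ := exists_norm_sub_sum_le (fun _ => norm_of_mem_hadamardStates)
    exists_mem_hadamardStates_le_inner (by rw [← l2norm_ofReal, ← hψr, hψ]) T
  refine ⟨(√2)⁻¹, fun k x => (φ k x : ℂ), sqrt_two_sub_one_div_two_le, le_rfl, fun k => ?_,
    fun k => ?_, ?_⟩
  · rw [l2norm_ofReal, norm_of_mem_hadamardStates (hφS k)]
  · obtain ⟨t, s, hts⟩ := hφS k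
    exact ⟨_, _, isPhaseOracle_diagonal_boolSign t, isPhaseOracle_diagonal_boolSign s,
      by simp only [diagonal_mul_hadamardPow_mulVec_e0, hts]⟩
  · calc _ = ‖ψr - ∑ k : Fin T, (√2)⁻¹ ^ ((k : ℕ) + 1) • φ k‖ := by
          rw [← l2norm_ofReal, hψr]
          congr 1
          funext x
          simp only [two_rpow_neg_div_two, Complex.ofReal_inv, Complex.ofReal_pow, inv_pow,
            Pi.sub_apply, Pi.smul_apply, Finset.sum_apply, smul_eq_mul, PiLp.sub_apply,
            WithLp.ofLp_sum, WithLp.ofLp_smul, Complex.ofReal_sub, Complex.ofReal_sum,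
            Complex.ofReal_mul, sub_right_inj, mul_sum]
          exact sum_congr rfl fun k _ => by ring
      _ ≤ _ := hφ.trans (inv_sqrt_two_pow_le T)

/-- Lemma 5: approximating a real state as a weighted sum of
`B₂ H^{⊗n} B₁ H^{⊗n} |0^n⟩` states. -/
theorem approx_coeff_simple (n : ℕ) (hn : 1 ≤ n) (ψ : Fin (2 ^ n) → ℂ)
    (hψ : l2norm ψ = 1) (hreal : ∀ i, (ψ i).im = 0) (T : ℕ) (hT : 1 ≤ T) :
    ∃ (ζ : ℝ) (ψs : Fin T → Fin (2 ^ n) → ℂ),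
      (Real.sqrt 2 - 1) / 2 ≤ ζ ∧ ζ ≤ (Real.sqrt 2)⁻¹ ∧
      (∀ k, l2norm (ψs k) = 1) ∧
      (∀ k : Fin T, ∃ B₁ B₂ : Matrix (Fin (2 ^ n)) (Fin (2 ^ n)) ℂ,
        IsPhaseOracle B₁ ∧ IsPhaseOracle B₂ ∧
        ψs k = (B₂ * hadamardPow n * B₁ * hadamardPow n).mulVec (e0 n)) ∧
      l2norm (ψ - (ζ : ℂ) •
          ∑ k : Fin T, (((2 : ℝ) ^ (-(k : ℝ) / 2) : ℝ) : ℂ) • ψs k)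
        ≤ (Real.sqrt 2 - 1)⁻¹ * (2 : ℝ) ^ (-(T : ℝ) / 4) :=
  approx_coeff_simple_general n ψ hψ hreal T
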